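/- arXiv:2108.12680 — 2 statements merged into one kernel-verified Lean document; each statement's English description precedes it below -/
import Mathlib

section
/- Let X = [x_1 ⋯ x_N] ∈ ℝ^{D×N} be a data matrix with rank(X) ≥ d. For each i = 1,…,N let i_1,…,i_k be indices in {1,…,N}\{i} and let w^{(i)} ∈ ℝ^k be a weight vector with ∑_{j=1}^k w_j^{(i)} = 1, and assume the exact reconstruction relations x_i = ∑_{j=1}^k w_j^{(i)} x_{i_j} hold for all i. Let u_1,…,u_d ∈ ℝ^D be orthonormal eigenvectors of X Xᵀ with corresponding eigenvalues λ_1,…,λ_d all positive, and let A = diag(λ_1^{-1/2},…,λ_d^{-1/2}) · [u_1 ⋯ u_d]ᵀ ∈ ℝ^{d×D}. Then Y := A X ∈ ℝ^{d×N} satisfies Y Yᵀ = I_d, the cost ∑_{i=1}^N ‖y_i − ∑_{j=1}^k w_j^{(i)} y_{i_j}‖² equals 0 (where y_i denotes the i-th column of Y), and consequently Y is a global minimizer of this cost over all Y' ∈ ℝ^{d×N} with Y' Y'ᵀ = I_d. -/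
open Matrix

/-!
The reconstruction relations say `X = X * W` for the matrix `W` of neighbour weights, so they pass
to `Y = A * X` and the cost of `Y` vanishes; being a sum of squares, it is then minimal. The rows
of `A` are eigenvectors of `X Xᵀ` rescaled by `λ^{-1/2}`, so `Y Yᵀ = A (X Xᵀ) Aᵀ` is the identity.
-/

namespace Matrix

variable {R : Type*} [CommRing R] {m n κ : Type*} [Fintype n] [Fintype κ]

theorem mul_mul_transpose_mul (A : Matrix m n R) (X : Matrix n κ R) :
    A * X * (A * X)ᵀ = A * (X * Xᵀ) * Aᵀ := by
  rw [transpose_mul]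
  simp only [Matrix.mul_assoc]

section NeighborWeights

variable [DecidableEq n]

def neighborWeightMatrix (nbr : n → κ → n) (w : n → κ → R) : Matrix n n R :=
  of fun s i => ∑ j, if nbr i j = s then w i j else 0

theorem mul_neighborWeightMatrix_apply (nbr : n → κ → n) (w : n → κ → R) (Y : Matrix m n R)
    (r : m) (i : n) : (Y * neighborWeightMatrix nbr w) r i = ∑ j, w i j * Y r (nbr i j) := by
  simp only [mul_apply, neighborWeightMatrix, of_apply, Finset.mul_sum, mul_ite, mul_zero]
  rw [Finset.sum_comm]
  simp only [Finset.sum_ite_eq, Finset.mem_univ, if_true]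
  exact Finset.sum_congr rfl fun j _ => mul_comm _ _

end NeighborWeights

section Eigenvectors

variable [Fintype m] [DecidableEq m]

theorem mul_mul_transpose_eq_diagonal_of_eigenvectors {U : Matrix m n R} {S : Matrix n n R}
    {lam : m → R} (hU : U * Uᵀ = 1) (heig : ∀ ℓ, S *ᵥ U ℓ = lam ℓ • U ℓ) :
    U * S * Uᵀ = diagonal lam := by
  have hcols : S * Uᵀ = Uᵀ * diagonal lam := by
    ext s ℓ
    rw [mul_diagonal, transpose_apply, mul_comm, ← smul_eq_mul, ← Pi.smul_apply, ← heig]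
    rfl
  rw [Matrix.mul_assoc, hcols, ← Matrix.mul_assoc, hU, Matrix.one_mul]

theorem diagonal_inv_sqrt_mul_mul_transpose_eq_one {U : Matrix m n ℝ} {S : Matrix n n ℝ}
    {lam : m → ℝ} (hlam : ∀ ℓ, 0 < lam ℓ) (hU : U * Uᵀ = 1)
    (heig : ∀ ℓ, S *ᵥ U ℓ = lam ℓ • U ℓ) :
    diagonal (fun ℓ => (Real.sqrt (lam ℓ))⁻¹) * U * S *
      (diagonal (fun ℓ => (Real.sqrt (lam ℓ))⁻¹) * U)ᵀ = 1 := by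
  set c : m → ℝ := fun ℓ => (Real.sqrt (lam ℓ))⁻¹
  have hc : ∀ ℓ, c ℓ * lam ℓ * c ℓ = 1 := fun ℓ => by
    have hsqrt := Real.sqrt_pos.mpr (hlam ℓ)
    simp only [c]
    field_simp
    rw [Real.sq_sqrt (hlam ℓ).le]
  calc diagonal c * U * S * (diagonal c * U)ᵀ = diagonal c * (U * S * Uᵀ) * diagonal c := by
        rw [transpose_mul, diagonal_transpose]
        simp only [Matrix.mul_assoc]
    _ = diagonal (fun ℓ => c ℓ * lam ℓ * c ℓ) := by
        rw [mul_mul_transpose_eq_diagonal_of_eigenvectors hU heig, diagonal_mul_diagonal,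
          diagonal_mul_diagonal]
    _ = 1 := by simp only [hc, diagonal_one]

end Eigenvectors

end Matrix

theorem lle_projection_pattern_general {D N d k : ℕ}
    (X : Matrix (Fin D) (Fin N) ℝ)
    (nbr : Fin N → Fin k → Fin N)
    (w : Fin N → Fin k → ℝ)
    (hrec : ∀ i r, X r i = ∑ j, w i j * X r (nbr i j))
    (u : Fin d → Fin D → ℝ)
    (horth : ∀ ℓ m, u ℓ ⬝ᵥ u m = if ℓ = m then (1 : ℝ) else 0)
    (lam : Fin d → ℝ) (hlam : ∀ ℓ, 0 < lam ℓ)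
    (heig : ∀ ℓ, (X * Xᵀ) *ᵥ u ℓ = lam ℓ • u ℓ)
    (A : Matrix (Fin d) (Fin D) ℝ)
    (hA : A = Matrix.diagonal (fun ℓ => (Real.sqrt (lam ℓ))⁻¹) * Matrix.of (fun ℓ r => u ℓ r))
    (Y : Matrix (Fin d) (Fin N) ℝ) (hY : Y = A * X) :
    Y * Yᵀ = 1 ∧
    (∑ i, ∑ r, (Y r i - ∑ j, w i j * Y r (nbr i j)) ^ 2) = 0 ∧
    ∀ Y' : Matrix (Fin d) (Fin N) ℝ, Y' * Y'ᵀ = 1 →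
      (∑ i, ∑ r, (Y r i - ∑ j, w i j * Y r (nbr i j)) ^ 2) ≤
        (∑ i, ∑ r, (Y' r i - ∑ j, w i j * Y' r (nbr i j)) ^ 2) := by
  set W := neighborWeightMatrix nbr w
  have hXW : X = X * W := ext fun r i => (hrec i r).trans (mul_neighborWeightMatrix_apply ..).symm
  have hYW : Y = Y * W := by rw [hY, Matrix.mul_assoc, ← hXW]
  have hU : of u * (of u)ᵀ = 1 := ext fun ℓ m => (horth ℓ m).trans Matrix.one_apply.symm
  have hYY : Y * Yᵀ = 1 := by
    rw [hY, hA, Matrix.mul_mul_transpose_mul]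
    exact diagonal_inv_sqrt_mul_mul_transpose_eq_one hlam hU heig
  have hcost : (∑ i, ∑ r, (Y r i - ∑ j, w i j * Y r (nbr i j)) ^ 2) = 0 :=
    Finset.sum_eq_zero fun i _ => Finset.sum_eq_zero fun r _ => by
      rw [← mul_neighborWeightMatrix_apply, ← hYW, sub_self, sq, mul_zero]
  refine ⟨hYY, hcost, fun Y' _ => ?_⟩
  rw [hcost]
  positivity

/-- Under exact reconstruction relations and `rank X ≥ d`, the matrix
`Y = A X` (with `A = diag(λ_ℓ^{-1/2}) ⬝ [u_1 ⋯ u_d]ᵀ` built from orthonormal eigenvectors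
of `X Xᵀ` with positive eigenvalues) satisfies `Y Yᵀ = I`, has zero LLE cost, and is a
global minimizer of the LLE cost over all `Y'` with `Y' Y'ᵀ = I`. -/
theorem lle_projection_pattern {D N d k : ℕ}
    (X : Matrix (Fin D) (Fin N) ℝ) (hrank : d ≤ X.rank)
    (nbr : Fin N → Fin k → Fin N) (hnbr : ∀ i j, nbr i j ≠ i)
    (w : Fin N → Fin k → ℝ) (hw : ∀ i, ∑ j, w i j = 1)
    (hrec : ∀ i r, X r i = ∑ j, w i j * X r (nbr i j))
    (u : Fin d → Fin D → ℝ)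
    (horth : ∀ ℓ m, u ℓ ⬝ᵥ u m = if ℓ = m then (1 : ℝ) else 0)
    (lam : Fin d → ℝ) (hlam : ∀ ℓ, 0 < lam ℓ)
    (heig : ∀ ℓ, (X * Xᵀ) *ᵥ u ℓ = lam ℓ • u ℓ)
    (A : Matrix (Fin d) (Fin D) ℝ)
    (hA : A = Matrix.diagonal (fun ℓ => (Real.sqrt (lam ℓ))⁻¹) * Matrix.of (fun ℓ r => u ℓ r))
    (Y : Matrix (Fin d) (Fin N) ℝ) (hY : Y = A * X) :
    Y * Yᵀ = 1 ∧
    (∑ i, ∑ r, (Y r i - ∑ j, w i j * Y r (nbr i j)) ^ 2) = 0 ∧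
    ∀ Y' : Matrix (Fin d) (Fin N) ℝ, Y' * Y'ᵀ = 1 →
      (∑ i, ∑ r, (Y r i - ∑ j, w i j * Y r (nbr i j)) ^ 2) ≤
        (∑ i, ∑ r, (Y' r i - ∑ j, w i j * Y' r (nbr i j)) ^ 2) :=
  lle_projection_pattern_general X nbr w hrec u horth lam hlam heig A hA Y hY
end

section
/- Let C ∈ ℝ^{k×k} be symmetric positive semidefinite, and for ε > 0 define w(ε) = (C + ε I_k)^{-1} 𝟙_k / (𝟙_kᵀ (C + ε I_k)^{-1} 𝟙_k). Then the limit w(0⁺) := lim_{ε→0⁺} w(ε) exists in ℝ^k, and w(0⁺) is an exact solution of the Lagrange system: there exists λ ∈ ℝ with C w(0⁺) = λ 𝟙_k and 𝟙_kᵀ w(0⁺) = 1. -/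
open Matrix BigOperators Filter

/-- For `C` symmetric positive semidefinite, the regularized weight vectors
`w(ε) = (C + ε I)⁻¹ 𝟙 / (𝟙ᵀ (C + ε I)⁻¹ 𝟙)` converge as `ε → 0⁺` to some `w(0⁺)`, which
solves the Lagrange system: `C w(0⁺) = λ 𝟙` for some `λ`, and `𝟙ᵀ w(0⁺) = 1`. -/
theorem regularized_weights_limit {k : ℕ} [NeZero k]
    (C : Matrix (Fin k) (Fin k) ℝ) (hC : C.PosSemidef)
    (w : ℝ → Fin k → ℝ)
    (hw : ∀ ε : ℝ, 0 < ε →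
      w ε = ((fun _ => (1 : ℝ)) ⬝ᵥ ((C + ε • (1 : Matrix (Fin k) (Fin k) ℝ))⁻¹ *ᵥ fun _ => (1 : ℝ)))⁻¹ •
        ((C + ε • (1 : Matrix (Fin k) (Fin k) ℝ))⁻¹ *ᵥ fun _ => (1 : ℝ))) :
    ∃ w0 : Fin k → ℝ,
      Filter.Tendsto w (nhdsWithin 0 (Set.Ioi 0)) (nhds w0) ∧
      ∃ lam : ℝ, C *ᵥ w0 = lam • (fun _ => (1 : ℝ)) ∧ ∑ j, w0 j = 1 := by
  classical
  have hH : C.IsHermitian := hC.1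
  set n1 : Fin k → ℝ := fun _ => (1 : ℝ) with hn1
  set U : Matrix (Fin k) (Fin k) ℝ := (hH.eigenvectorUnitary : Matrix (Fin k) (Fin k) ℝ) with hUdef
  set d : Fin k → ℝ := hH.eigenvalues with hddef
  have hUU : U * star U = 1 := (Matrix.mem_unitaryGroup_iff).mp hH.eigenvectorUnitary.2
  have hUU' : star U * U = 1 := (Matrix.mem_unitaryGroup_iff').mp hH.eigenvectorUnitary.2
  have hspec : C = U * diagonal d * star U := by simpa using hH.spectral_theorem
  set a : Fin k → ℝ := star U *ᵥ n1 with hadef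
  have hUa : U *ᵥ a = n1 := by
    rw [hadef, mulVec_mulVec, hUU, one_mulVec]
  have hdnn : ∀ i, 0 ≤ d i := hC.eigenvalues_nonneg
  have hstarT : star U = Uᵀ := Matrix.conjTranspose_eq_transpose_of_trivial U
  have hdot : ∀ g : Fin k → ℝ, n1 ⬝ᵥ (U *ᵥ g) = a ⬝ᵥ g := by
    intro g
    rw [Matrix.dotProduct_mulVec, hadef, hstarT, mulVec_transpose]
  -- the regularized matrix and its inverse
  have hreg : ∀ ε : ℝ, 0 < ε → C + ε • (1 : Matrix (Fin k) (Fin k) ℝ)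
      = U * diagonal (fun i => d i + ε) * star U := by
    intro ε hε
    have h1 : diagonal (fun i : Fin k => d i + ε) = diagonal d + ε • 1 := by
      ext i j
      rcases eq_or_ne i j with rfl | hij
      · simp [Matrix.diagonal_apply]
      · simp [Matrix.diagonal_apply, Matrix.one_apply, hij]
    rw [h1, Matrix.mul_add, Matrix.add_mul, ← hspec, Matrix.mul_smul, Matrix.smul_mul,
      Matrix.mul_one, hUU]
  have hinv : ∀ ε : ℝ, 0 < ε → (C + ε • (1 : Matrix (Fin k) (Fin k) ℝ))⁻¹
      = U * diagonal (fun i => (d i + ε)⁻¹) * star U := by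
    intro ε hε
    have hne : ∀ i, d i + ε ≠ 0 := fun i =>
      ne_of_gt (add_pos_of_nonneg_of_pos (hdnn i) hε)
    apply Matrix.inv_eq_right_inv
    rw [hreg ε hε]
    calc (U * diagonal (fun i => d i + ε) * star U) * (U * diagonal (fun i => (d i + ε)⁻¹) * star U)
        = U * diagonal (fun i => d i + ε) * (star U * U) * diagonal (fun i => (d i + ε)⁻¹) * star U := by
          noncomm_ring
      _ = U * (diagonal (fun i => d i + ε) * diagonal (fun i => (d i + ε)⁻¹)) * star U := by
          rw [hUU']; noncomm_ring
      _ = 1 := by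
          rw [Matrix.diagonal_mul_diagonal]
          have : (fun i => (d i + ε) * (d i + ε)⁻¹) = fun _ : Fin k => (1:ℝ) := by
            funext i; exact mul_inv_cancel₀ (hne i)
          rw [this, Matrix.diagonal_one, Matrix.mul_one, hUU]
  have hz : ∀ ε : ℝ, 0 < ε → (C + ε • (1 : Matrix (Fin k) (Fin k) ℝ))⁻¹ *ᵥ n1
      = U *ᵥ (fun i => (d i + ε)⁻¹ * a i) := by
    intro ε hε
    rw [hinv ε hε, ← mulVec_mulVec, ← mulVec_mulVec, ← hadef]
    have : (diagonal fun i => (d i + ε)⁻¹) *ᵥ a = fun i => (d i + ε)⁻¹ * a i :=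
      funext fun i => mulVec_diagonal _ _ _
    rw [this]
  have hwj : ∀ ε : ℝ, 0 < ε → ∀ j, w ε j =
      (∑ i, U j i * ((d i + ε)⁻¹ * a i)) / (∑ i, a i * ((d i + ε)⁻¹ * a i)) := by
    intro ε hε j
    rw [hw ε hε]
    have hzv := hz ε hε
    simp only [Pi.smul_apply, smul_eq_mul, hzv, hdot]
    simp [Matrix.mulVec, dotProduct, div_eq_inv_mul]
  have hexist_a : ∃ i, a i ≠ 0 := by
    by_contra h
    push_neg at h
    have ha0 : a = 0 := funext fun i => h i
    have h1 : n1 = 0 := by rw [← hUa, ha0, mulVec_zero]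
    have h2 := congrFun h1 ⟨0, Nat.pos_of_ne_zero (NeZero.ne k)⟩
    simp [hn1] at h2
  obtain ⟨t, ℓ, μ, ht, hwt, hcpos, hμ⟩ :
      ∃ (t : ℝ → Fin k → ℝ) (ℓ : Fin k → ℝ) (μ : ℝ),
        (∀ i, Tendsto (fun ε => a i * t ε i) (nhdsWithin 0 (Set.Ioi 0)) (nhds (a i * ℓ i))) ∧
        (∀ ε : ℝ, 0 < ε → ∀ j, w ε j =
          (∑ i, U j i * (a i * t ε i)) / (∑ i, a i * (a i * t ε i))) ∧
        (0 < ∑ i, a i * (a i * ℓ i)) ∧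
        (∀ i, d i * (a i * ℓ i) = μ * a i) := by
    by_cases hker : ∃ i, d i = 0 ∧ a i ≠ 0
    · -- kernel case : rescale by ε
      refine ⟨fun ε i => ε * (d i + ε)⁻¹, fun i => if d i = 0 then 1 else 0, 0, ?_, ?_, ?_, ?_⟩
      · intro i
        by_cases hdi : d i = 0
        · have heq : (fun ε : ℝ => a i * (ε * (d i + ε)⁻¹)) =ᶠ[nhdsWithin 0 (Set.Ioi 0)]
              fun _ => a i * (if d i = 0 then (1:ℝ) else 0) := by
            filter_upwards [self_mem_nhdsWithin] with ε hε
            have hε' : (ε:ℝ) ≠ 0 := ne_of_gt hε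
            simp [hdi, mul_inv_cancel₀ hε']
          exact tendsto_const_nhds.congr' heq.symm
        · have hne : d i + 0 ≠ 0 := by simpa using hdi
          have hcont : ContinuousAt (fun ε : ℝ => a i * (ε * (d i + ε)⁻¹)) 0 :=
            continuousAt_const.mul (continuousAt_id.mul
              ((continuousAt_const.add continuousAt_id).inv₀ hne))
          have := hcont.tendsto.mono_left (nhdsWithin_le_nhds : nhdsWithin (0:ℝ) (Set.Ioi 0) ≤ nhds 0)
          simpa [hdi] using this
      · intro ε hε j
        rw [hwj ε hε j]
        have hn : (∑ i, U j i * (a i * (ε * (d i + ε)⁻¹)))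
            = ε * ∑ i, U j i * ((d i + ε)⁻¹ * a i) := by
          rw [Finset.mul_sum]; exact Finset.sum_congr rfl fun i _ => by ring
        have hd2 : (∑ i, a i * (a i * (ε * (d i + ε)⁻¹)))
            = ε * ∑ i, a i * ((d i + ε)⁻¹ * a i) := by
          rw [Finset.mul_sum]; exact Finset.sum_congr rfl fun i _ => by ring
        rw [hn, hd2, mul_div_mul_left _ _ (ne_of_gt hε)]
      · obtain ⟨i0, hd0, ha0⟩ := hker
        apply Finset.sum_pos'
        · intro i _
          by_cases hdi : d i = 0
          · simp only [hdi, if_pos, mul_one]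
            exact mul_self_nonneg _
          · simp [hdi]
        · refine ⟨i0, Finset.mem_univ _, ?_⟩
          simpa [hd0] using mul_self_pos.2 ha0
      · intro i
        by_cases hdi : d i = 0 <;> simp [hdi]
    · -- positive definite on relevant part
      push_neg at hker
      refine ⟨fun ε i => (d i + ε)⁻¹, fun i => (d i)⁻¹, 1, ?_, ?_, ?_, ?_⟩
      · intro i
        by_cases hdi : d i = 0
        · simp [hker i hdi]
        · have hne : d i + 0 ≠ 0 := by simpa using hdi
          have hcont : ContinuousAt (fun ε : ℝ => a i * (d i + ε)⁻¹) 0 :=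
            continuousAt_const.mul ((continuousAt_const.add continuousAt_id).inv₀ hne)
          have := hcont.tendsto.mono_left (nhdsWithin_le_nhds : nhdsWithin (0:ℝ) (Set.Ioi 0) ≤ nhds 0)
          simpa using this
      · intro ε hε j
        rw [hwj ε hε j]
        congr 1 <;> exact Finset.sum_congr rfl fun i _ => by ring
      · obtain ⟨i1, ha1⟩ := hexist_a
        have hd1 : d i1 ≠ 0 := fun h => ha1 (hker i1 h)
        apply Finset.sum_pos'
        · intro i _
          have : a i * (a i * (d i)⁻¹) = (d i)⁻¹ * (a i * a i) := by ring
          rw [this]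
          exact mul_nonneg (inv_nonneg.2 (hdnn i)) (mul_self_nonneg _)
        · refine ⟨i1, Finset.mem_univ _, ?_⟩
          have : a i1 * (a i1 * (d i1)⁻¹) = (d i1)⁻¹ * (a i1 * a i1) := by ring
          rw [this]
          exact mul_pos (inv_pos.2 ((hdnn i1).lt_of_ne (Ne.symm hd1))) (mul_self_pos.2 ha1)
      · intro i
        by_cases hdi : d i = 0
        · simp [hdi, hker i hdi]
        · field_simp
  -- assemble the limit
  set g : Fin k → ℝ := fun i => a i * ℓ i with hgdef
  set c : ℝ := ∑ i, a i * g i with hcdef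
  set w0 : Fin k → ℝ := fun j => (∑ i, U j i * g i) / c with hw0def
  have hw0v : w0 = c⁻¹ • (U *ᵥ g) := by
    funext j
    simp [hw0def, Matrix.mulVec, dotProduct, div_eq_inv_mul]
  refine ⟨w0, ?_, ?_⟩
  · rw [tendsto_pi_nhds]
    intro j
    have hnum : Tendsto (fun ε => ∑ i, U j i * (a i * t ε i)) (nhdsWithin 0 (Set.Ioi 0))
        (nhds (∑ i, U j i * g i)) :=
      tendsto_finset_sum _ fun i _ => (ht i).const_mul _
    have hden : Tendsto (fun ε => ∑ i, a i * (a i * t ε i)) (nhdsWithin 0 (Set.Ioi 0))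
        (nhds c) :=
      tendsto_finset_sum _ fun i _ => (ht i).const_mul _
    have hlim := hnum.div hden (ne_of_gt hcpos)
    apply hlim.congr'
    filter_upwards [self_mem_nhdsWithin] with ε hε
    exact (hwt ε hε j).symm
  · refine ⟨c⁻¹ * μ, ?_, ?_⟩
    · have hCU : C * U = U * diagonal d := by
        rw [hspec, Matrix.mul_assoc (U * diagonal d) (star U) U, hUU', Matrix.mul_one]
      have h2 : C *ᵥ (U *ᵥ g) = μ • n1 := by
        rw [mulVec_mulVec, hCU, ← mulVec_mulVec]
        have h3 : diagonal d *ᵥ g = μ • a := by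
          funext i
          rw [mulVec_diagonal]
          exact (hμ i).trans (by simp)
        rw [h3, mulVec_smul, hUa]
      rw [hw0v, mulVec_smul, h2, smul_smul]
    · have hsum : ∑ j, w0 j = (n1 ⬝ᵥ (U *ᵥ g)) / c := by
        rw [← Finset.sum_div]
        congr 1
        simp [dotProduct, Matrix.mulVec, hn1]
      rw [hsum, hdot]
      have : a ⬝ᵥ g = c := by simp [dotProduct, hcdef]
      rw [this, div_self (ne_of_gt hcpos)]
end
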